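/- arXiv:1702.00175 — 2 statements merged into one kernel-verified Lean document; each statement's English description precedes it below -/
import Mathlib

section
/- Let R be a commutative Noetherian ring and 𝔞 an ideal of R. Assume that for every k ∈ ℕ there is a ring homomorphism φ_k : R → R such that the inverse system of ideals {φ_k(𝔞)R}_{k∈ℕ} is cofinal with {𝔞^k}_{k∈ℕ} (i.e., for every i there exists j with 𝔞^j ⊆ φ_i(𝔞)R ⊆ 𝔞). If R is relative Cohen-Macaulay with respect to 𝔞, then f_𝔞(R) = f_{φ_k(𝔞)R}(R) for all k ∈ ℕ. -/
open CategoryTheory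

noncomputable section

universe u v

/-- The `i`-th local cohomology module of the `R`-module `M` with support in the ideal `I`. -/
abbrev LC (R : Type u) [CommRing R] (I : Ideal R) (i : ℕ)
    (M : Type u) [AddCommGroup M] [Module R M] : ModuleCat.{u} R :=
  (localCohomology I i).obj (ModuleCat.of R M)

/-- `M` is relative Cohen-Macaulay with respect to `I` if there is precisely one
non-vanishing local cohomology module of `M` with support in `I`
(equivalently, `grade(I,M) = cd(I,M)`). -/
def IsRelativeCM (R : Type u) [CommRing R] (I : Ideal R)
    (M : Type u) [AddCommGroup M] [Module R M] : Prop :=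
  ∃! i : ℕ, Nontrivial (LC R I i M)

/-- The `M`-height of the ideal `I`: the infimum of `dim_{R_p} M_p`
(i.e. the height of `p` in the support of `M`) over primes `p ∈ Supp M ∩ V(I)`. -/
def heightM (R : Type u) [CommRing R] (I : Ideal R)
    (M : Type u) [AddCommGroup M] [Module R M] : ℕ∞ :=
  sInf {n : ℕ∞ | ∃ p : Module.support R M, I ≤ (p : PrimeSpectrum R).asIdeal ∧
    n = Order.height p}

/-- Krull dimension of the module `M`: the supremum of heights of primes in its support. -/
def moduleDim (R : Type u) [CommRing R]
    (M : Type u) [AddCommGroup M] [Module R M] : ℕ∞ :=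
  sSup {n : ℕ∞ | ∃ p : Module.support R M, n = Order.height p}

/-- The finiteness dimension `f_I(M)`: the least `i` such that `H^i_I(M)` is
not finitely generated (`+∞` if there is no such `i`). -/
def finDim (R : Type u) [CommRing R] (I : Ideal R)
    (M : Type u) [AddCommGroup M] [Module R M] : ℕ∞ :=
  sInf {n : ℕ∞ | ∃ i : ℕ, n = i ∧ ¬ Module.Finite R (LC R I i M)}

/-- The `b`-finiteness dimension `f_I^b(M)`: the least `i` such that
`b ⊄ Rad(Ann H^i_I(M))`. -/
def bFinDim (R : Type u) [CommRing R] (I b : Ideal R)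
    (M : Type u) [AddCommGroup M] [Module R M] : ℕ∞ :=
  sInf {n : ℕ∞ | ∃ i : ℕ, n = i ∧ ¬ b ≤ (Module.annihilator R (LC R I i M)).radical}

/-- `q_I(M)`: the supremum of `i` such that `H^i_I(M)` is not Artinian. -/
def qDim (R : Type u) [CommRing R] (I : Ideal R)
    (M : Type u) [AddCommGroup M] [Module R M] : ℕ∞ :=
  sSup {n : ℕ∞ | ∃ i : ℕ, n = i ∧ ¬ IsArtinian R (LC R I i M)}

/-- grade of `I` on `M`: the least `i` with `H^i_I(M) ≠ 0`. -/
def gradeNat (R : Type u) [CommRing R] (I : Ideal R)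
    (M : Type u) [AddCommGroup M] [Module R M] : ℕ :=
  sInf {i : ℕ | Nontrivial (LC R I i M)}

/-- cohomological dimension of `M` with respect to `I`:
the greatest `i` with `H^i_I(M) ≠ 0`. -/
def cdNat (R : Type u) [CommRing R] (I : Ideal R)
    (M : Type u) [AddCommGroup M] [Module R M] : ℕ :=
  sSup {i : ℕ | Nontrivial (LC R I i M)}

/-- The depth of a module, expressed as the grade of the ideal `J`:
the least `i` with `H^i_J(M) ≠ 0`, as an element of `ℕ∞`. -/
def lcDepth (R : Type u) [CommRing R] (J : Ideal R)
    (M : Type u) [AddCommGroup M] [Module R M] : ℕ∞ :=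
  sInf {n : ℕ∞ | ∃ i : ℕ, n = i ∧ Nontrivial (LC R J i M)}

/-- The height of an ideal: the infimum of heights of primes containing it. -/
def idealHeight (R : Type u) [CommRing R] (I : Ideal R) : ℕ∞ :=
  sInf {n : ℕ∞ | ∃ p : PrimeSpectrum R, I ≤ p.asIdeal ∧ n = Order.height p}

/-- The `b`-minimum `I`-adjusted depth `λ_I^b(M)`:
`inf {depth M_p + height((I+p)/p) : p ∈ Spec R \ V(b)}`. -/
def lambdaDim (R : Type u) [CommRing R] (I b : Ideal R)
    (M : Type u) [AddCommGroup M] [Module R M] : ℕ∞ :=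
  sInf {n : ℕ∞ | ∃ p : PrimeSpectrum R, ¬ b ≤ p.asIdeal ∧
    n = lcDepth (Localization.AtPrime p.asIdeal)
          (IsLocalRing.maximalIdeal (Localization.AtPrime p.asIdeal))
          (LocalizedModule p.asIdeal.primeCompl M)
        + idealHeight (R ⧸ p.asIdeal) (Ideal.map (Ideal.Quotient.mk p.asIdeal) I)}

theorem stmt12 (R : Type u) [CommRing R] [IsNoetherianRing R] (𝔞 : Ideal R)
    (φ : ℕ → (R →+* R))
    (hcof : ∀ i : ℕ, ∃ j : ℕ, 𝔞 ^ j ≤ Ideal.map (φ i) 𝔞 ∧ Ideal.map (φ i) 𝔞 ≤ 𝔞)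
    (hcm : IsRelativeCM R 𝔞 R) :
    ∀ k : ℕ, finDim R 𝔞 R = finDim R (Ideal.map (φ k) 𝔞) R := by
  intro k
  obtain ⟨j, h1, h2⟩ := hcof k
  have hrad : 𝔞.radical = (Ideal.map (φ k) 𝔞).radical := by
    apply le_antisymm
    · intro x hx
      obtain ⟨n, hn⟩ := hx
      exact ⟨n * j, by rw [pow_mul]; exact h1 (Ideal.pow_mem_pow hn j)⟩
    · exact Ideal.radical_mono h2
  have hiff : ∀ i : ℕ, Module.Finite R (LC R 𝔞 i R) ↔
      Module.Finite R (LC R (Ideal.map (φ k) 𝔞) i R) := by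
    intro i
    have e := ((localCohomology.isoOfSameRadical hrad i).app (ModuleCat.of R R)).toLinearEquiv
    exact ⟨fun h => Module.Finite.equiv e, fun h => Module.Finite.equiv e.symm⟩
  unfold finDim
  congr 1
  ext n
  simp only [Set.mem_setOf_eq, hiff]
end
end

section
/- Let R be a commutative Noetherian ring and 𝔞 a proper ideal of R such that R is relative Cohen-Macaulay with respect to 𝔞, and let M be a faithful multiplication R-module which is finitely generated. Then f_𝔞(M) = f_𝔞(R). -/
open CategoryTheory

noncomputable section

universe u v

/-! A finitely generated faithful multiplication module `M` has a dual basis `(gⱼ, fⱼ)` whose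
trace `∑ fⱼ(gⱼ)` equals `1`: writing `R gⱼ = 𝔟ⱼ M`, faithfulness and Nakayama give `∑ 𝔟ⱼ = R`;
elements `bⱼ ∈ 𝔟ⱼ` with `∑ bⱼ = 1` map `M` into `R gⱼ`, which yields `fⱼ` with `fⱼ(x) gⱼ = bⱼ² x`,
and the `bⱼ²` still generate the unit ideal. Hence `M` is a direct summand of `Rⁿ` and `R` is a direct summand of `Mⁿ`. Local cohomology is an
additive functor, so it preserves finite direct sums and direct summands, and `H^i_𝔞(M)` is
finitely generated exactly when `H^i_𝔞(R)` is, for every `i`. -/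

section MultiplicationModule

variable {R : Type*} [CommRing R] {M : Type*} [AddCommGroup M] [Module R M]

theorem Ideal.eq_top_of_smul_top_eq_top [Module.Finite R M]
    (hfaithful : Module.annihilator R M = ⊥) {I : Ideal R}
    (hI : I • (⊤ : Submodule R M) = ⊤) : I = ⊤ := by
  obtain ⟨r, hr1, hr⟩ := Submodule.exists_sub_one_mem_and_smul_eq_zero_of_fg_of_le_smul I ⊤
    Module.Finite.fg_top hI.ge
  have hr0 : r = 0 := by
    rw [← Submodule.mem_bot R, ← hfaithful, Module.mem_annihilator]
    exact fun m => hr m Submodule.mem_top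
  rw [hr0, zero_sub] at hr1
  exact I.eq_top_of_isUnit_mem hr1 isUnit_one.neg

/-- Writing `b • x = t • g`, the value `f x = b * t` does not depend on `t`, because faithfulness
forces `b` to kill the torsion ideal of `g`. -/
theorem exists_linearMap_smul_eq_sq_smul (hfaithful : Module.annihilator R M = ⊥)
    {g : M} {b : R} (hb : ∀ x : M, b • x ∈ R ∙ g) :
    ∃ f : M →ₗ[R] R, (∀ x, f x • g = (b ^ 2) • x) ∧ f g = b ^ 2 := by
  have hker : Ideal.torsionOf R M g ≤ LinearMap.ker (LinearMap.mulLeft R b) := by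
    intro a (ha : a • g = 0)
    rw [LinearMap.mem_ker, LinearMap.mulLeft_apply, ← Submodule.mem_bot R, ← hfaithful,
      Module.mem_annihilator]
    intro x
    obtain ⟨t, ht⟩ := Submodule.mem_span_singleton.mp (hb x)
    rw [mul_comm, mul_smul, ← ht, smul_comm, ha, smul_zero]
  let f : M →ₗ[R] R := (Ideal.torsionOf R M g).liftQ (LinearMap.mulLeft R b) hker ∘ₗ
    (Ideal.quotTorsionOfEquivSpanSingleton R M g).symm.toLinearMap ∘ₗ
    (LinearMap.lsmul R M b).codRestrict (R ∙ g) hb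
  have hf : ∀ x t, t • g = b • x → f x = b * t := by
    intro x t ht
    have : (LinearMap.lsmul R M b).codRestrict (R ∙ g) hb x =
        Ideal.quotTorsionOfEquivSpanSingleton R M g (Submodule.Quotient.mk t) :=
      Subtype.ext ht.symm
    simp only [f, LinearMap.comp_apply, LinearEquiv.coe_coe, this,
      LinearEquiv.symm_apply_apply, Submodule.liftQ_apply, LinearMap.mulLeft_apply]
  refine ⟨f, fun x => ?_, (hf g b rfl).trans (sq b).symm⟩
  obtain ⟨t, ht⟩ := Submodule.mem_span_singleton.mp (hb x)
  rw [hf x t ht, mul_smul, ht, smul_smul, sq]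

theorem exists_sum_eq_one_smul_mem_span_singleton [Module.Finite R M]
    (hfaithful : Module.annihilator R M = ⊥)
    (hmult : ∀ N : Submodule R M, ∃ 𝔟 : Ideal R, N = 𝔟 • (⊤ : Submodule R M))
    {n : ℕ} {g : Fin n → M} (hg : Submodule.span R (Set.range g) = ⊤) :
    ∃ b : Fin n → R, ∑ j, b j = 1 ∧ ∀ j x, b j • x ∈ R ∙ g j := by
  choose 𝔟 h𝔟 using fun j => hmult (R ∙ g j)
  have htop : (⨆ j, 𝔟 j) • (⊤ : Submodule R M) = ⊤ := by
    simp_rw [Submodule.iSup_smul, ← h𝔟, ← Submodule.span_range_eq_iSup, hg]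
  obtain ⟨b, hb𝔟, hsum⟩ := (Submodule.mem_iSup_iff_exists_finsupp 𝔟 1).mp
    ((Ideal.eq_top_of_smul_top_eq_top hfaithful htop).symm ▸ Submodule.mem_top)
  refine ⟨b, by rwa [Finsupp.sum_fintype _ _ fun _ => rfl] at hsum, fun j x => ?_⟩
  rw [h𝔟 j]
  exact Submodule.smul_mem_smul (hb𝔟 j) Submodule.mem_top

theorem exists_dual_basis_sum_eq_one [Module.Finite R M]
    (hfaithful : Module.annihilator R M = ⊥)
    (hmult : ∀ N : Submodule R M, ∃ 𝔟 : Ideal R, N = 𝔟 • (⊤ : Submodule R M)) :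
    ∃ (n : ℕ) (g : Fin n → M) (f : Fin n → M →ₗ[R] R),
      (∀ x, ∑ j, f j x • g j = x) ∧ ∑ j, f j (g j) = 1 := by
  obtain ⟨n, g, hg⟩ := Module.Finite.exists_fin (R := R) (M := M)
  obtain ⟨b, hbsum, hb⟩ := exists_sum_eq_one_smul_mem_span_singleton hfaithful hmult hg
  choose f hfx hfg using fun j => exists_linearMap_smul_eq_sq_smul hfaithful (hb j)
  have hsq : Ideal.span (Set.range fun j => b j ^ 2) = ⊤ := by
    have hspan : Ideal.span (Set.range b) = ⊤ :=
      (Ideal.eq_top_iff_one _).mpr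
        (hbsum ▸ Ideal.sum_mem _ fun j _ => Ideal.subset_span ⟨j, rfl⟩)
    simpa only [← Set.range_comp, Function.comp_def] using Ideal.span_pow_eq_top _ hspan 2
  obtain ⟨d, hd⟩ := Ideal.mem_span_range_iff_exists_fun.mp (hsq ▸ Submodule.mem_top (x := 1))
  refine ⟨n, g, fun j => d j • f j, fun x => ?_, ?_⟩
  · calc ∑ j, (d j • f j) x • g j = ∑ j, (d j * b j ^ 2) • x := by
          simp only [LinearMap.smul_apply, smul_eq_mul, mul_smul, hfx]
      _ = x := by rw [← Finset.sum_smul, hd, one_smul]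
  · simpa [hfg] using hd

end MultiplicationModule

open CategoryTheory.Limits

theorem NatTrans.leftDerived_add {C D : Type*} [Category C] [Abelian C] [HasProjectiveResolutions C]
    [Category D] [Abelian D] {F G : C ⥤ D} [F.Additive] [G.Additive] (α β : F ⟶ G) (n : ℕ) :
    NatTrans.leftDerived (α + β) n = NatTrans.leftDerived α n + NatTrans.leftDerived β n := by
  ext X
  let P : ProjectiveResolution X := (HasProjectiveResolution.out (Z := X)).some
  have hmap : (NatTrans.mapHomologicalComplex (α + β) (ComplexShape.down ℕ)).app P.complex =
      (NatTrans.mapHomologicalComplex α _).app P.complex +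
        (NatTrans.mapHomologicalComplex β _).app P.complex := by
    ext i
    rfl
  simp only [NatTrans.app_add, ProjectiveResolution.leftDerived_app_eq _ P, hmap, Functor.map_add,
    Preadditive.comp_add, Preadditive.add_comp]

theorem NatTrans.rightOp_add {C D : Type*} [Category C] [Category D] [Preadditive D]
    {F G : Cᵒᵖ ⥤ D} (α β : F ⟶ G) :
    NatTrans.rightOp (α + β) = NatTrans.rightOp α + NatTrans.rightOp β := by
  ext X
  simp [NatTrans.rightOp, op_add]

theorem NatTrans.leftOp_add {C D : Type*} [Category C] [Category D] [Preadditive D]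
    {F G : C ⥤ Dᵒᵖ} (α β : F ⟶ G) :
    NatTrans.leftOp (α + β) = NatTrans.leftOp α + NatTrans.leftOp β := by
  ext X
  simp [NatTrans.leftOp, unop_add]

theorem linearYoneda_map_add (R : Type*) [Ring R] {C : Type*} [Category C] [Preadditive C]
    [Linear R C] {Y Z : C} (f g : Y ⟶ Z) :
    (linearYoneda R C).map (f + g) = (linearYoneda R C).map f + (linearYoneda R C).map g := by
  ext X u
  exact Preadditive.comp_add _ _ _ _ _ _

instance Ext.obj_additive (R : Type*) [Ring R] (C : Type*) [Category C] [Abelian C] [Linear R C]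
    [EnoughProjectives C] (n : ℕ) (X : Cᵒᵖ) : ((Ext R C n).obj X).Additive where
  map_add {Y Z f g} := by
    change (NatTrans.leftOp (NatTrans.leftDerived
      (NatTrans.rightOp ((linearYoneda R C).map (f + g))) n)).app X = _
    rw [linearYoneda_map_add, NatTrans.rightOp_add, NatTrans.leftDerived_add,
      NatTrans.leftOp_add, NatTrans.app_add]
    rfl

instance Functor.colimit_additive {J C E : Type*} [Category J] [Category C] [Preadditive C]
    [Category E] [Preadditive E] [HasColimitsOfShape J E] (D : J ⥤ C ⥤ E)
    [∀ j, (D.obj j).Additive] : (colimit D).Additive where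
  map_add {X Y f g} := by
    apply (isColimitOfPreserves ((evaluation C E).obj X) (colimit.isColimit D)).hom_ext
    intro j
    have hnat : ∀ h : X ⟶ Y, (colimit.ι D j).app X ≫ (colimit D).map h =
        (D.obj j).map h ≫ (colimit.ι D j).app Y := fun h => ((colimit.ι D j).naturality h).symm
    change (colimit.ι D j).app X ≫ (colimit D).map (f + g) =
      (colimit.ι D j).app X ≫ ((colimit D).map f + (colimit D).map g)
    rw [hnat, Functor.map_add, Preadditive.add_comp, Preadditive.comp_add, hnat, hnat]

instance localCohomology.additive {R : Type*} [CommRing R] (J : Ideal R) (i : ℕ) :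
    (localCohomology J i).Additive :=
  have : ∀ j, ((localCohomology.diagram (localCohomology.idealPowersDiagram J) i).obj j).Additive :=
    fun _ => Ext.obj_additive R (ModuleCat R) i _
  Functor.colimit_additive (localCohomology.diagram (localCohomology.idealPowersDiagram J) i)

section Finiteness

variable {R : Type*} [Ring R]

theorem ModuleCat.finite_of_retract {X Y : ModuleCat R} (h : Retract X Y) [Module.Finite R Y] :
    Module.Finite R X :=
  Module.Finite.of_surjective h.r.hom ((ModuleCat.epi_iff_surjective _).mp inferInstance)

theorem ModuleCat.finite_obj_pi (F : ModuleCat R ⥤ ModuleCat R) [F.Additive] (ι : Type) [Finite ι]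
    (Y : ModuleCat R) [Module.Finite R (F.obj Y)] :
    Module.Finite R (F.obj (ModuleCat.of R (ι → Y))) :=
  Module.Finite.equiv ((F.mapIso (ModuleCat.biproductIsoPi fun _ : ι => Y)).symm ≪≫
    F.mapBiproduct _ ≪≫ ModuleCat.biproductIsoPi fun _ : ι => F.obj Y).symm.toLinearEquiv

theorem ModuleCat.finite_obj_of_retract_pi (F : ModuleCat R ⥤ ModuleCat R) [F.Additive]
    {ι : Type} [Finite ι] {X Y : ModuleCat R} (h : Retract X (ModuleCat.of R (ι → Y)))
    [Module.Finite R (F.obj Y)] : Module.Finite R (F.obj X) :=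
  have := ModuleCat.finite_obj_pi F ι Y
  ModuleCat.finite_of_retract (h.map F)

end Finiteness

section DualBasis

variable {R : Type u} [CommRing R] {M : Type u} [AddCommGroup M] [Module R M]
  {ι : Type} [Fintype ι] (g : ι → M) (f : ι → M →ₗ[R] R)

def retractPiOfDualBasis (h : ∀ x, ∑ j, f j x • g j = x) :
    Retract (ModuleCat.of R M) (ModuleCat.of R (ι → R)) where
  i := ModuleCat.ofHom (LinearMap.pi f)
  r := ModuleCat.ofHom (Fintype.linearCombination R g)
  retract := by ext x; simp [Fintype.linearCombination_apply, h]

def retractPiOfTraceEqOne [DecidableEq ι] (h : ∑ j, f j (g j) = 1) :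
    Retract (ModuleCat.of R R) (ModuleCat.of R (ι → M)) where
  i := ModuleCat.ofHom (LinearMap.pi fun j => LinearMap.toSpanSingleton R M (g j))
  r := ModuleCat.ofHom (LinearMap.lsum R (fun _ => M) R f)
  retract := by ext; simp [h]

end DualBasis

theorem finDim_eq_of_forall_finite_iff {R : Type u} [CommRing R] {I : Ideal R}
    {M N : Type u} [AddCommGroup M] [Module R M] [AddCommGroup N] [Module R N]
    (h : ∀ i, Module.Finite R (LC R I i M) ↔ Module.Finite R (LC R I i N)) :
    finDim R I M = finDim R I N := by
  simp only [finDim, h]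

theorem stmt15_general (R : Type u) [CommRing R] (𝔞 : Ideal R)
    (M : Type u) [AddCommGroup M] [Module R M] [Module.Finite R M]
    (hfaithful : Module.annihilator R M = ⊥)
    (hmult : ∀ N : Submodule R M, ∃ 𝔟 : Ideal R, N = 𝔟 • (⊤ : Submodule R M)) :
    finDim R 𝔞 M = finDim R 𝔞 R := by
  obtain ⟨n, g, f, hdual, htrace⟩ := exists_dual_basis_sum_eq_one hfaithful hmult
  refine finDim_eq_of_forall_finite_iff fun i => ⟨fun _ => ?_, fun _ => ?_⟩
  · exact ModuleCat.finite_obj_of_retract_pi (localCohomology 𝔞 i) (Y := .of R M)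
      (retractPiOfTraceEqOne g f htrace)
  · exact ModuleCat.finite_obj_of_retract_pi (localCohomology 𝔞 i) (Y := .of R R)
      (retractPiOfDualBasis g f hdual)

theorem stmt15 (R : Type u) [CommRing R] [IsNoetherianRing R] (𝔞 : Ideal R)
    (hproper : 𝔞 ≠ ⊤) (hcm : IsRelativeCM R 𝔞 R)
    (M : Type u) [AddCommGroup M] [Module R M] [Module.Finite R M]
    (hfaithful : Module.annihilator R M = ⊥)
    (hmult : ∀ N : Submodule R M, ∃ 𝔟 : Ideal R, N = 𝔟 • (⊤ : Submodule R M)) :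
    finDim R 𝔞 M = finDim R 𝔞 R :=
  stmt15_general R 𝔞 M hfaithful hmult
end
end
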